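/- For p ≤ 2, the set of continuous paths w : [0,1] → ℝ of finite p-variation is a null set for the one-dimensional Wiener measure. Equivalently: almost surely, a Brownian path on [0,1] has infinite p-variation for every p ≤ 2 (in the sup-over-partitions sense). In particular, almost surely sup_P Σ_i |w_{t_i} - w_{t_{i-1}}|² = ∞. -/

import Mathlib

/-!
Call `β` admissible if every interval `[a, a + h] ⊆ [0, 1]` almost surely carries a partition
whose sum of squared increments is at least `β h`. If `β` is admissible, cut `[a, a + h]` into `N`
cells of length `c = h / N` and on each cell keep the single increment or the partition already
available, whichever gives more: the total is at least `∑ⱼ min (max (ΔⱼW²) (β c)) ((β + 1) c)`.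
These capped squares are i.i.d., confined to an interval of length `c`, and have mean at least
`c (β + δ β)` with `δ β = P(Z² ≥ β + 1) > 0`, so by Chebyshev their sum falls below
`(β + δ β / 2) h` with probability at most `1 / (δ β ^ 2 N)`; letting `N → ∞`, `β + δ β / 2` is
admissible. Since `δ` is positive and antitone, iterating `β ↦ β + δ β / 2` from `0` is unbounded.
For `p ≤ 2` the increments of a continuous path are bounded by some `C`, and
`|x| ^ p ≥ C ^ (p - 2) x ^ 2` carries the unbounded squared sums over to `p`-variation sums.
-/

open scoped BigOperators
open MeasureTheory ProbabilityTheory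

/-- Set of p-variation partition sums of a one-parameter path on `[0,1]`. -/
def pathPVarSums (x : ℝ → ℝ) (p : ℝ) : Set ℝ :=
  {r | ∃ (n : ℕ) (t : Fin (n + 1) → ℝ), Monotone t ∧ t 0 = 0 ∧ t (Fin.last n) = 1 ∧
    r = (∑ i : Fin n, |x (t i.succ) - x (t i.castSucc)| ^ p) ^ (1 / p)}

/-- `W` is a standard one-dimensional Brownian motion on `[0,1]`: it starts at `0`,
has continuous sample paths, independent increments, and Gaussian increments
`W_t - W_s ∼ N(0, t - s)` for `0 ≤ s ≤ t ≤ 1`. -/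
structure IsBrownianMotion {Ω : Type*} [MeasurableSpace Ω] (μ : Measure Ω)
    (W : ℝ → Ω → ℝ) : Prop where
  isProb : IsProbabilityMeasure μ
  meas : ∀ t : ℝ, Measurable (W t)
  start : ∀ ω, W 0 ω = 0
  contPaths : ∀ ω, Continuous fun t => W t ω
  gaussianIncr : ∀ s t : ℝ, 0 ≤ s → s ≤ t → t ≤ 1 →
    Measure.map (fun ω => W t ω - W s ω) μ = gaussianReal 0 (Real.toNNReal (t - s))
  indepIncr : ∀ (n : ℕ) (t : Fin (n + 1) → ℝ), Monotone t → 0 ≤ t 0 → t (Fin.last n) ≤ 1 →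
    iIndepFun
      (fun (i : Fin n) ω => W (t i.succ) ω - W (t i.castSucc) ω) μ

open Finset Set Filter Topology

def HasSqSumGE (f : ℝ → ℝ) (a b s : ℝ) : Prop :=
  ∃ (n : ℕ) (t : ℕ → ℝ), Monotone t ∧ t 0 = a ∧ t n = b ∧
    s ≤ ∑ i ∈ range n, (f (t (i + 1)) - f (t i)) ^ 2

namespace HasSqSumGE

variable {f : ℝ → ℝ} {a b c s s' : ℝ}

lemma mono (h : HasSqSumGE f a b s) (hs : s' ≤ s) : HasSqSumGE f a b s' := by
  obtain ⟨n, t, ht, h0, hn, hsum⟩ := h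
  exact ⟨n, t, ht, h0, hn, hs.trans hsum⟩

lemma refl (f : ℝ → ℝ) (a : ℝ) : HasSqSumGE f a a 0 :=
  ⟨0, fun _ => a, monotone_const, rfl, rfl, by simp⟩

lemma of_le (hab : a ≤ b) : HasSqSumGE f a b ((f b - f a) ^ 2) := by
  refine ⟨1, fun i => if i = 0 then a else b, monotone_nat_of_le_succ fun i => ?_, rfl, rfl,
    by simp⟩
  by_cases hi : i = 0 <;> simp [hi, hab]

lemma trans (h₁ : HasSqSumGE f a b s) (h₂ : HasSqSumGE f b c s') :
    HasSqSumGE f a c (s + s') := by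
  obtain ⟨n, u, hu, hu0, hun, hus⟩ := h₁
  obtain ⟨m, v, hv, hv0, hvm, hvs⟩ := h₂
  let w : ℕ → ℝ := fun i => if i < n then u i else v (i - n)
  have hwu : ∀ i ≤ n, w i = u i := by
    intro i hi
    rcases hi.lt_or_eq with hi | rfl
    · simp [w, hi]
    · simp [w, hun, hv0]
  have hwv : ∀ j, w (n + j) = v j := fun j => by simp [w]
  refine ⟨n + m, w, monotone_nat_of_le_succ fun i => ?_, by simp [hwu 0 (Nat.zero_le n), hu0],
    by simp [hwv, hvm], ?_⟩
  · rcases lt_or_ge i n with hi | hi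
    · rw [hwu i hi.le, hwu (i + 1) hi]
      exact hu (Nat.le_succ i)
    · obtain ⟨j, rfl⟩ := Nat.exists_eq_add_of_le hi
      rw [hwv, add_assoc, hwv]
      exact hv (Nat.le_succ j)
  · rw [sum_range_add]
    refine add_le_add (hus.trans_eq (sum_congr rfl fun i hi => ?_))
      (hvs.trans_eq (sum_congr rfl fun j _ => ?_))
    · rw [Finset.mem_range] at hi
      rw [hwu i hi.le, hwu (i + 1) hi]
    · rw [hwv, add_assoc, hwv]

lemma max_sq (h : HasSqSumGE f a b s) (hab : a ≤ b) :
    HasSqSumGE f a b (max s ((f b - f a) ^ 2)) := by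
  rcases le_total s ((f b - f a) ^ 2) with hs | hs
  · rw [max_eq_right hs]
    exact of_le hab
  · rwa [max_eq_left hs]

lemma sum {t s : ℕ → ℝ} {N : ℕ} (h : ∀ j < N, HasSqSumGE f (t j) (t (j + 1)) (s j)) :
    HasSqSumGE f (t 0) (t N) (∑ j ∈ range N, s j) := by
  induction N with
  | zero => simpa using refl f (t 0)
  | succ N ih =>
    rw [sum_range_succ]
    exact (ih fun j hj => h j (by omega)).trans (h N N.lt_succ_self)

lemma exists_fin_partition (h : HasSqSumGE f a b s) :
    ∃ (n : ℕ) (t : Fin (n + 1) → ℝ), Monotone t ∧ t 0 = a ∧ t (Fin.last n) = b ∧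
      s ≤ ∑ i : Fin n, |f (t i.succ) - f (t i.castSucc)| ^ 2 := by
  obtain ⟨n, t, ht, h0, hn, hsum⟩ := h
  refine ⟨n, fun i => t i, ht.comp Fin.val_strictMono.monotone, h0, hn, ?_⟩
  rw [← Fin.sum_univ_eq_sum_range (fun i => (f (t (i + 1)) - f (t i)) ^ 2)] at hsum
  simpa only [sq_abs, Fin.val_succ, Fin.val_castSucc] using hsum

end HasSqSumGE

lemma rpow_sub_two_mul_sq_le_abs_rpow {x C p : ℝ} (hp : p ≤ 2) (hx : |x| ≤ C) :
    C ^ (p - 2) * x ^ 2 ≤ |x| ^ p := by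
  rcases eq_or_ne x 0 with rfl | hx0
  · simpa using Real.rpow_nonneg le_rfl p
  have hpos : 0 < |x| := abs_pos.mpr hx0
  calc C ^ (p - 2) * x ^ 2 ≤ |x| ^ (p - 2) * |x| ^ (2 : ℝ) := by
        rw [Real.rpow_two, sq_abs]
        exact mul_le_mul_of_nonneg_right
          (Real.rpow_le_rpow_of_nonpos hpos hx (by linarith)) (sq_nonneg x)
    _ = |x| ^ p := by rw [← Real.rpow_add hpos, sub_add_cancel]

section

variable {f : ℝ → ℝ}

lemma not_bddAbove_sqSums (hf : ∀ s, HasSqSumGE f 0 1 s) :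
    ¬ BddAbove {r : ℝ | ∃ (n : ℕ) (t : Fin (n + 1) → ℝ), Monotone t ∧ t 0 = 0 ∧
      t (Fin.last n) = 1 ∧ r = ∑ i : Fin n, |f (t i.succ) - f (t i.castSucc)| ^ 2} := by
  rw [not_bddAbove_iff]
  intro M
  obtain ⟨n, t, ht, h0, h1, hsum⟩ := (hf (M + 1)).exists_fin_partition
  exact ⟨_, ⟨n, t, ht, h0, h1, rfl⟩, by linarith⟩

lemma not_bddAbove_pathPVarSums (hf : ContinuousOn f (Icc 0 1)) (hsq : ∀ s, HasSqSumGE f 0 1 s)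
    {p : ℝ} (hp : 0 < p) (hp2 : p ≤ 2) : ¬ BddAbove (pathPVarSums f p) := by
  obtain ⟨C, hC⟩ : ∃ C, ∀ x ∈ Icc (0 : ℝ) 1, |f x| ≤ C := by
    simpa only [Real.norm_eq_abs] using isCompact_Icc.exists_bound_of_continuousOn hf
  have hC0 : 0 ≤ C := (abs_nonneg _).trans (hC 0 ⟨le_rfl, zero_le_one⟩)
  have hosc : ∀ x ∈ Icc (0 : ℝ) 1, ∀ y ∈ Icc (0 : ℝ) 1, |f y - f x| ≤ 2 * C + 1 :=
    fun x hx y hy => (abs_sub _ _).trans (by linarith [hC x hx, hC y hy])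
  rw [not_bddAbove_iff]
  intro M
  set M' := |M| + 1
  obtain ⟨n, t, ht, h0, h1, hsum⟩ := (hsq (M' ^ p * (2 * C + 1) ^ (2 - p))).exists_fin_partition
  have ht01 : ∀ i, t i ∈ Icc (0 : ℝ) 1 := fun i =>
    ⟨h0 ▸ ht (Fin.zero_le i), h1 ▸ ht (Fin.le_last i)⟩
  have hsum_p : M' ^ p ≤ ∑ i : Fin n, |f (t i.succ) - f (t i.castSucc)| ^ p := by
    calc M' ^ p = (2 * C + 1) ^ (p - 2) * (M' ^ p * (2 * C + 1) ^ (2 - p)) := by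
          rw [mul_left_comm, ← Real.rpow_add (by positivity), sub_add_sub_cancel', sub_self,
            Real.rpow_zero, mul_one]
      _ ≤ (2 * C + 1) ^ (p - 2) * ∑ i : Fin n, |f (t i.succ) - f (t i.castSucc)| ^ 2 := by
          gcongr
      _ ≤ ∑ i : Fin n, |f (t i.succ) - f (t i.castSucc)| ^ p := by
          rw [mul_sum]
          refine sum_le_sum fun i _ => ?_
          rw [sq_abs]
          exact rpow_sub_two_mul_sq_le_abs_rpow hp2 (hosc _ (ht01 _) _ (ht01 _))
  refine ⟨_, ⟨n, t, ht, h0, h1, rfl⟩, (le_abs_self M).trans_lt (lt_add_one _) |>.trans_le ?_⟩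
  rw [one_div, Real.le_rpow_inv_iff_of_pos (by positivity) (sum_nonneg fun i _ => by positivity) hp]
  exact hsum_p

end

noncomputable def gaussianTail (α : ℝ) : ℝ := (gaussianReal 0 1).real {x | α + 1 ≤ x ^ 2}

lemma measurableSet_le_sq (α : ℝ) : MeasurableSet {x : ℝ | α + 1 ≤ x ^ 2} :=
  measurableSet_le measurable_const (measurable_id.pow_const 2)

lemma gaussianTail_pos (α : ℝ) : 0 < gaussianTail α := by
  have hIcc : Icc (√(|α| + 1)) (√(|α| + 1) + 1) ⊆ {x : ℝ | α + 1 ≤ x ^ 2} := fun x hx => by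
    have hsq := pow_le_pow_left₀ (Real.sqrt_nonneg _) hx.1 2
    rw [Real.sq_sqrt (by positivity)] at hsq
    exact (add_le_add_left (le_abs_self α) 1).trans hsq
  have hvol : volume {x : ℝ | α + 1 ≤ x ^ 2} ≠ 0 :=
    fun h => by simpa [Real.volume_Icc] using measure_mono_null hIcc h
  exact ENNReal.toReal_pos (fun h => hvol (gaussianReal_absolutelyContinuous' 0 one_ne_zero h))
    (measure_ne_top _ _)

lemma gaussianTail_antitone : Antitone gaussianTail := fun α β hαβ =>
  measureReal_mono fun x (hx : β + 1 ≤ x ^ 2) => show α + 1 ≤ x ^ 2 by linarith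

noncomputable def sqSumBound : ℕ → ℝ
  | 0 => 0
  | k + 1 => sqSumBound k + gaussianTail (sqSumBound k) / 2

lemma exists_le_sqSumBound (M : ℝ) : ∃ k, M ≤ sqSumBound k := by
  by_contra! hM
  have hδ := gaussianTail_pos M
  have hlin : ∀ k : ℕ, k * (gaussianTail M / 2) ≤ sqSumBound k := by
    intro k
    induction k with
    | zero => simp [sqSumBound]
    | succ k ih =>
      have := gaussianTail_antitone (hM k).le
      rw [sqSumBound]
      push_cast
      linarith
  obtain ⟨k, hk⟩ := exists_nat_gt (M / (gaussianTail M / 2))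
  rw [div_lt_iff₀ (by positivity)] at hk
  linarith [hlin k, hM k]

def clampSq (α c x : ℝ) : ℝ := min (max (x ^ 2) (α * c)) ((α + 1) * c)

lemma continuous_clampSq (α c : ℝ) : Continuous (clampSq α c) := by
  unfold clampSq
  fun_prop

lemma clampSq_mem_Icc {c : ℝ} (hc : 0 ≤ c) (α x : ℝ) :
    clampSq α c x ∈ Icc (α * c) ((α + 1) * c) :=
  ⟨le_min (le_max_right _ _) (by nlinarith), min_le_right _ _⟩

lemma clampSq_le_max (α c x : ℝ) : clampSq α c x ≤ max (α * c) (x ^ 2) :=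
  (min_le_left _ _).trans_eq (max_comm _ _)

lemma clampSq_sqrt_mul {c : ℝ} (hc : 0 ≤ c) (α z : ℝ) :
    clampSq α c (√c * z) = c * clampSq α 1 z := by
  simp only [clampSq, mul_pow, Real.sq_sqrt hc, mul_one, mul_min_of_nonneg _ _ hc,
    mul_max_of_nonneg _ _ hc]
  ring_nf

lemma add_indicator_le_clampSq_one (α z : ℝ) :
    α + {x : ℝ | α + 1 ≤ x ^ 2}.indicator (1 : ℝ → ℝ) z ≤ clampSq α 1 z := by
  simp only [clampSq, mul_one]
  by_cases hz : α + 1 ≤ z ^ 2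
  · simp [hz]
  · simp only [indicator_of_notMem (show z ∉ {x : ℝ | α + 1 ≤ x ^ 2} from hz), add_zero]
    exact le_min (le_max_right _ _) (by linarith)

lemma mul_add_gaussianTail_le_integral_clampSq {c : ℝ} (hc : 0 ≤ c) (α : ℝ) :
    c * (α + gaussianTail α) ≤ ∫ x, clampSq α c x ∂gaussianReal 0 c.toNNReal := by
  have hmap : gaussianReal 0 c.toNNReal = (gaussianReal 0 1).map (√c * ·) := by
    rw [gaussianReal_map_const_mul]
    congr 1
    · simp
    · ext
      simp [Real.sq_sqrt hc, Real.coe_toNNReal _ hc]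
  have hind : Integrable ({x : ℝ | α + 1 ≤ x ^ 2}.indicator (1 : ℝ → ℝ)) (gaussianReal 0 1) :=
    (integrable_const 1).indicator (measurableSet_le_sq α)
  have hclamp : Integrable (clampSq α 1) (gaussianReal 0 1) :=
    .of_mem_Icc _ _ (continuous_clampSq α 1).aemeasurable
      (ae_of_all _ (clampSq_mem_Icc zero_le_one α))
  rw [hmap, integral_map (by fun_prop) (continuous_clampSq α c).aestronglyMeasurable]
  simp_rw [clampSq_sqrt_mul hc, integral_const_mul]
  refine mul_le_mul_of_nonneg_left ?_ hc
  calc α + gaussianTail α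
      = ∫ z, α + {x : ℝ | α + 1 ≤ x ^ 2}.indicator (1 : ℝ → ℝ) z ∂gaussianReal 0 1 := by
        rw [integral_add (integrable_const α) hind, integral_const, integral_indicator_one
          (measurableSet_le_sq α)]
        simp [gaussianTail]
    _ ≤ ∫ z, clampSq α 1 z ∂gaussianReal 0 1 :=
        integral_mono ((integrable_const α).add hind) hclamp (add_indicator_le_clampSq_one α)

lemma ProbabilityTheory.iIndepFun.measure_sum_le_sum_integral_sub_le {Ω ι : Type*}
    [MeasurableSpace Ω] {μ : Measure Ω} [IsProbabilityMeasure μ] [Fintype ι] {F : ι → Ω → ℝ}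
    (hF : iIndepFun F μ) (hFm : ∀ i, Measurable (F i)) {a b : ℝ}
    (hab : ∀ i ω, F i ω ∈ Icc a b) {ε : ℝ} (hε : 0 < ε) :
    μ {ω | ∑ i, F i ω ≤ ∑ i, μ[F i] - ε}
      ≤ ENNReal.ofReal (Fintype.card ι * ((b - a) / 2) ^ 2 / ε ^ 2) := by
  have hL2 : ∀ i, MemLp (F i) 2 μ := fun i =>
    memLp_of_bounded (ae_of_all _ (hab i)) (hFm i).aestronglyMeasurable 2
  have hmean : μ[∑ i, F i] = ∑ i, μ[F i] := by
    simp only [Finset.sum_apply]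
    exact integral_finsetSum _ fun i _ => (hL2 i).integrable one_le_two
  have hvar : variance (∑ i, F i) μ ≤ Fintype.card ι * ((b - a) / 2) ^ 2 := by
    rw [IndepFun.variance_sum (fun i _ => hL2 i) fun i _ j _ hij => hF.indepFun hij]
    simpa using sum_le_sum fun i (_ : i ∈ Finset.univ) =>
      variance_le_sq_of_bounded (ae_of_all _ (hab i)) (hFm i).aemeasurable
  calc μ {ω | ∑ i, F i ω ≤ ∑ i, μ[F i] - ε}
      ≤ μ {ω | ε ≤ |(∑ i, F i) ω - μ[∑ i, F i]|} := by
        refine measure_mono fun ω (hω : ∑ i, F i ω ≤ _) => ?_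
        change ε ≤ |_|
        rw [hmean, Finset.sum_apply, abs_sub_comm]
        exact le_abs.mpr (Or.inl (by linarith))
    _ ≤ ENNReal.ofReal (variance (∑ i, F i) μ / ε ^ 2) :=
        meas_ge_le_variance_div_sq (memLp_finsetSum' _ fun i _ => hL2 i) hε
    _ ≤ _ := ENNReal.ofReal_le_ofReal (by gcongr)

namespace IsBrownianMotion

variable {Ω : Type*} [MeasurableSpace Ω] {μ : Measure Ω} {W : ℝ → Ω → ℝ}

lemma measure_sum_clampSq_lt_le (hW : IsBrownianMotion μ W) {a c : ℝ} (ha : 0 ≤ a) (hc : 0 < c)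
    {N : ℕ} (hN : 0 < N) (hend : a + N * c ≤ 1) (α : ℝ) :
    μ {ω | ∑ j ∈ range N, clampSq α c (W (a + j * c + c) ω - W (a + j * c) ω)
        < (α + gaussianTail α / 2) * (N * c)}
      ≤ ENNReal.ofReal ((gaussianTail α ^ 2 * N)⁻¹) := by
  have := hW.isProb
  let t : Fin (N + 1) → ℝ := fun i => a + i * c
  have ht : Monotone t := fun i j hij => by
    simp only [t]
    gcongr
    exact_mod_cast hij
  have ht01 : ∀ i, 0 ≤ t i ∧ t i ≤ 1 := fun i =>
    ⟨by positivity, (ht (Fin.le_last i)).trans (by simpa [t] using hend)⟩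
  have hincr : ∀ i : Fin N, t i.succ - t i.castSucc = c := fun i => by
    simp only [t, Fin.val_succ, Fin.val_castSucc]
    push_cast
    ring
  let F : Fin N → Ω → ℝ := fun i ω => clampSq α c (W (t i.succ) ω - W (t i.castSucc) ω)
  have hD : ∀ i : Fin N, Measurable fun ω => W (t i.succ) ω - W (t i.castSucc) ω :=
    fun i => (hW.meas _).sub (hW.meas _)
  have hF : iIndepFun F μ := (hW.indepIncr N t ht (ht01 0).1 (ht01 _).2).comp _
    fun _ => (continuous_clampSq α c).measurable
  have hmean : ∀ i, c * (α + gaussianTail α) ≤ μ[F i] := fun i => by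
    have hlaw := hW.gaussianIncr _ _ (ht01 i.castSucc).1 (ht (Fin.castSucc_le_succ i))
      (ht01 i.succ).2
    rw [hincr] at hlaw
    calc c * (α + gaussianTail α) ≤ ∫ x, clampSq α c x ∂gaussianReal 0 c.toNNReal :=
          mul_add_gaussianTail_le_integral_clampSq hc.le α
      _ = μ[F i] := by
          rw [← hlaw,
            integral_map (hD i).aemeasurable (continuous_clampSq α c).aestronglyMeasurable]
  have hδ := gaussianTail_pos α
  have hε : 0 < gaussianTail α / 2 * (N * c) := by positivity
  calc _ ≤ μ {ω | ∑ i, F i ω ≤ ∑ i, μ[F i] - gaussianTail α / 2 * (N * c)} := by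
        refine measure_mono ?_
        intro ω hω
        rw [mem_ofPred_eq] at hω ⊢
        have hsum : ∑ j ∈ range N, clampSq α c (W (a + j * c + c) ω - W (a + j * c) ω)
            = ∑ i, F i ω := by
          rw [← Fin.sum_univ_eq_sum_range]
          simp [F, t, add_mul, add_assoc]
        have hmeans : N * (c * (α + gaussianTail α)) ≤ ∑ i, μ[F i] := by
          simpa using sum_le_sum fun i (_ : i ∈ Finset.univ) => hmean i
        nlinarith
    _ ≤ ENNReal.ofReal (Fintype.card (Fin N) * (((α + 1) * c - α * c) / 2) ^ 2
          / (gaussianTail α / 2 * (N * c)) ^ 2) :=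
        hF.measure_sum_le_sum_integral_sub_le
          (fun i => (continuous_clampSq α c).measurable.comp (hD i))
          (fun i ω => clampSq_mem_Icc hc.le α _) hε
    _ = ENNReal.ofReal ((gaussianTail α ^ 2 * N)⁻¹) := by
        congr 1
        rw [Fintype.card_fin]
        field_simp
        ring

lemma ae_hasSqSumGE_add_gaussianTail (hW : IsBrownianMotion μ W) {a h α : ℝ} (ha : 0 ≤ a)
    (hh : 0 < h) (hah : a + h ≤ 1)
    (hsub : ∀ᵐ ω ∂μ, ∀ N : ℕ, ∀ j < N,
      HasSqSumGE (W · ω) (a + j * (h / N)) (a + j * (h / N) + h / N) (α * (h / N))) :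
    ∀ᵐ ω ∂μ, HasSqSumGE (W · ω) a (a + h) ((α + gaussianTail α / 2) * h) := by
  let X : ℕ → Ω → ℝ := fun N ω => ∑ j ∈ range N,
    clampSq α (h / N) (W (a + j * (h / N) + h / N) ω - W (a + j * (h / N)) ω)
  have hNh : ∀ N : ℕ, 0 < N → (N : ℝ) * (h / N) = h := fun N hN =>
    mul_div_cancel₀ _ (by positivity)
  have hgood : ∀ᵐ ω ∂μ, ∃ N, 0 < N ∧ (α + gaussianTail α / 2) * h ≤ X N ω := by
    have hbound : ∀ N : ℕ, 0 < N →
        μ {ω | ¬ ∃ N, 0 < N ∧ (α + gaussianTail α / 2) * h ≤ X N ω}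
          ≤ ENNReal.ofReal ((gaussianTail α ^ 2 * N)⁻¹) := fun N hN => by
      refine (measure_mono fun ω hω => ?_).trans (hW.measure_sum_clampSq_lt_le (c := h / N) ha
        (by positivity) hN (by rw [hNh N hN]; exact hah) α)
      simp only [mem_ofPred_eq, not_exists, not_and, not_le] at hω
      rw [mem_ofPred_eq, hNh N hN]
      exact hω N hN
    have htend :
        Tendsto (fun N : ℕ => ENNReal.ofReal ((gaussianTail α ^ 2 * N)⁻¹)) atTop (𝓝 0) := by
      rw [← ENNReal.ofReal_zero]
      exact ENNReal.tendsto_ofReal (tendsto_inv_atTop_zero.comp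
        (tendsto_natCast_atTop_atTop.const_mul_atTop (pow_pos (gaussianTail_pos α) 2)))
    exact ae_iff.2 (le_antisymm (ge_of_tendsto htend (eventually_atTop.2 ⟨1, hbound⟩)) bot_le)
  filter_upwards [hsub, hgood] with ω hω ⟨N, hN, hX⟩
  have hglue := HasSqSumGE.sum (t := fun j : ℕ => a + j * (h / N)) (N := N)
    (s := fun j => max (α * (h / N)) ((W (a + j * (h / N) + h / N) ω - W (a + j * (h / N)) ω) ^ 2))
    fun j hj => by
      have hstep : a + ((j + 1 : ℕ) : ℝ) * (h / N) = a + j * (h / N) + h / N := by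
        push_cast
        ring
      rw [hstep]
      exact (hω N j hj).max_sq (le_add_of_nonneg_right (by positivity))
  simp only [Nat.cast_zero, zero_mul, add_zero, hNh N hN] at hglue
  exact hglue.mono (hX.trans (sum_le_sum fun j _ => clampSq_le_max _ _ _))

lemma ae_hasSqSumGE_sqSumBound (hW : IsBrownianMotion μ W) (k : ℕ) {a h : ℝ} (ha : 0 ≤ a)
    (hh : 0 < h) (hah : a + h ≤ 1) :
    ∀ᵐ ω ∂μ, HasSqSumGE (W · ω) a (a + h) (sqSumBound k * h) := by
  induction k generalizing a h with
  | zero =>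
    refine ae_of_all _ fun ω => (HasSqSumGE.of_le (by linarith)).mono ?_
    simp only [sqSumBound, zero_mul]
    positivity
  | succ k ih =>
    refine hW.ae_hasSqSumGE_add_gaussianTail ha hh hah
      (ae_all_iff.2 fun N => ae_all_iff.2 fun j => ?_)
    by_cases hj : j < N
    · have hjN : (j : ℝ) + 1 ≤ N := by exact_mod_cast hj
      have hN : (0 : ℝ) < N := by linarith [(Nat.cast_nonneg j : (0 : ℝ) ≤ j)]
      refine (ih (by positivity) (by positivity) ?_).mono fun ω hω _ => hω
      calc a + j * (h / N) + h / N = a + ((j : ℝ) + 1) / N * h := by ring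
        _ ≤ a + 1 * h := by gcongr; rwa [div_le_one hN]
        _ ≤ 1 := by linarith
    · exact ae_of_all _ fun ω hj' => absurd hj' hj

lemma ae_forall_hasSqSumGE (hW : IsBrownianMotion μ W) :
    ∀ᵐ ω ∂μ, ∀ s, HasSqSumGE (W · ω) 0 1 s := by
  filter_upwards [ae_all_iff.2 fun k =>
    hW.ae_hasSqSumGE_sqSumBound k le_rfl one_pos (zero_add (1 : ℝ)).le] with ω hω s
  obtain ⟨k, hk⟩ := exists_le_sqSumBound s
  simpa using (hω k).mono (by simpa using hk)

end IsBrownianMotion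

/-- Almost surely, a Brownian path on `[0,1]` has infinite `p`-variation for every `p ≤ 2`:
the set of partition sums is unbounded above; in particular (p = 2) almost surely
`sup_P ∑ᵢ |w_{tᵢ} - w_{tᵢ₋₁}|² = ∞`. -/
theorem brownian_infinite_pVariation {Ω : Type*} [MeasurableSpace Ω] (μ : Measure Ω)
    (W : ℝ → Ω → ℝ) (hW : IsBrownianMotion μ W) :
    ∀ᵐ ω ∂μ, (∀ p : ℝ, 1 ≤ p → p ≤ 2 → ¬ BddAbove (pathPVarSums (fun t => W t ω) p)) ∧
      ¬ BddAbove {r : ℝ | ∃ (n : ℕ) (t : Fin (n + 1) → ℝ),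
        Monotone t ∧ t 0 = 0 ∧ t (Fin.last n) = 1 ∧
        r = ∑ i : Fin n, |W (t i.succ) ω - W (t i.castSucc) ω| ^ 2} := by
  filter_upwards [hW.ae_forall_hasSqSumGE] with ω hω
  exact ⟨fun p hp1 hp2 => not_bddAbove_pathPVarSums (hW.contPaths ω).continuousOn hω
    (by linarith) hp2, not_bddAbove_sqSums (f := fun t => W t ω) hω⟩
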